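/- arXiv:1302.6452 — 6 statements merged into one kernel-verified Lean document; each statement's English description precedes it below -/
import Mathlib

section
/- If Z_1, ..., Z_{n+1} are exchangeable real-valued random variables that are almost surely distinct, then the rank of Z_{n+1} among Z_1, ..., Z_{n+1} is uniformly distributed on {1, 2, ..., n+1}. -/
/-!
With almost surely distinct values the ranks `rank Z j`, `j ∈ ι`, are almost surely a permutation
of `{1, …, |ι|}`, so for each `k` exactly one of the events `{rank Z j = k}` occurs. Exchangeability
(through the transposition of `j` and `j'`) makes these `|ι|` events equally likely, hence each has
probability `1 / |ι|`.
-/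

open MeasureTheory Finset
open scoped ENNReal

section Rank

variable {ι α : Type*} [Fintype ι]

def rank [LinearOrder α] (v : ι → α) (j : ι) : ℕ := #{i | v i ≤ v j}

variable [LinearOrder α] {v : ι → α}

lemma one_le_rank (j : ι) : 1 ≤ rank v j :=
  card_pos.2 ⟨j, by simp⟩

lemma rank_le_fintype_card (j : ι) : rank v j ≤ Fintype.card ι :=
  card_filter_le _ _

lemma rank_lt_rank {a b : ι} (h : v a < v b) : rank v a < rank v b := by
  refine card_lt_card ⟨fun i hi => ?_, fun hsub => ?_⟩
  · simp only [mem_filter, mem_univ, true_and] at hi ⊢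
    exact hi.trans h.le
  have hb : b ∈ ({i | v i ≤ v b} : Finset ι) := by simp
  exact (mem_filter.1 (hsub hb)).2.not_gt h

lemma rank_injective (hv : Function.Injective v) : Function.Injective (rank v) := by
  intro a b hab
  by_contra hne
  rcases (hv.ne hne).lt_or_gt with h | h
  · exact (rank_lt_rank h).ne hab
  · exact (rank_lt_rank h).ne' hab

lemma existsUnique_rank_eq (hv : Function.Injective v) {k : ℕ} (hk1 : 1 ≤ k)
    (hk2 : k ≤ Fintype.card ι) : ∃! j, rank v j = k := by
  have himage : univ.image (rank v) = Icc 1 (Fintype.card ι) := by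
    refine eq_of_subset_of_card_le (fun r hr => ?_) ?_
    · obtain ⟨j, -, rfl⟩ := mem_image.1 hr
      exact mem_Icc.2 ⟨one_le_rank j, rank_le_fintype_card j⟩
    · rw [card_image_of_injective _ (rank_injective hv), Nat.card_Icc, card_univ]
      omega
  obtain ⟨j, -, hj⟩ := mem_image.1 (himage ▸ mem_Icc.2 ⟨hk1, hk2⟩ : k ∈ univ.image (rank v))
  exact ⟨j, hj, fun i hi => rank_injective hv (hi.trans hj.symm)⟩

lemma rank_comp_perm (v : ι → α) (e : Equiv.Perm ι) (j : ι) :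
    rank (fun i => v (e i)) j = rank v (e j) :=
  card_equiv e fun i => by simp

lemma measurable_rank [MeasurableSpace α] [TopologicalSpace α] [OpensMeasurableSpace α]
    [OrderClosedTopology α] [SecondCountableTopology α] (j : ι) :
    Measurable fun v : ι → α => rank v j := by
  simp_rw [rank, card_filter]
  exact Finset.measurable_sum _ fun i _ =>
    Measurable.ite (measurableSet_le (measurable_pi_apply i) (measurable_pi_apply j))
      measurable_const measurable_const

end Rank

section Probability

variable {Ω ι α : Type*} [MeasurableSpace Ω] {μ : Measure Ω}

lemma sum_measure_eq_one_of_ae_existsUnique [IsProbabilityMeasure μ] [Fintype ι]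
    {B : ι → Set Ω} (hB : ∀ j, NullMeasurableSet (B j) μ) (h : ∀ᵐ ω ∂μ, ∃! j, ω ∈ B j) :
    ∑ j, μ (B j) = 1 := by
  have hdisj : Pairwise (Function.onFun (AEDisjoint μ) B) := fun i j hij =>
    measure_eq_zero_iff_ae_notMem.2 <| h.mono fun ω ⟨_, _, huniq⟩ hω =>
      hij ((huniq i hω.1).trans (huniq j hω.2).symm)
  have hcover : ∀ᵐ ω ∂μ, ω ∈ ⋃ j, B j := h.mono fun ω ⟨j, hj, _⟩ => Set.mem_iUnion.2 ⟨j, hj⟩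
  rw [← tsum_fintype (L := SummationFilter.unconditional _), ← measure_iUnion₀ hdisj hB,
    ← prob_compl_eq_zero_iff₀ (NullMeasurableSet.iUnion hB)]
  exact measure_eq_zero_iff_ae_notMem.2 (hcover.mono fun ω hω hω' => hω' hω)

lemma ae_injective_of_measure_eq_null [Countable ι] {Z : ι → Ω → α}
    (hdist : ∀ i j, i ≠ j → μ {ω | Z i ω = Z j ω} = 0) :
    ∀ᵐ ω ∂μ, Function.Injective fun i => Z i ω := by
  have hne : ∀ i j, ∀ᵐ ω ∂μ, i ≠ j → Z i ω ≠ Z j ω := fun i j => by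
    by_cases hij : i = j
    · exact .of_forall fun _ h => (h hij).elim
    · exact (measure_eq_zero_iff_ae_notMem.1 (hdist i j hij)).mono fun _ h _ => h
  filter_upwards [ae_all_iff.2 fun i => ae_all_iff.2 (hne i)] with ω hω i j hZ
  by_contra hij
  exact hω i j hij hZ

def Exchangeable [MeasurableSpace α] (μ : Measure Ω) (Z : ι → Ω → α) : Prop :=
  ∀ e : Equiv.Perm ι, μ.map (fun ω i => Z (e i) ω) = μ.map (fun ω i => Z i ω)

variable [LinearOrder α] [MeasurableSpace α] [TopologicalSpace α]
  [OpensMeasurableSpace α] [OrderClosedTopology α] [SecondCountableTopology α]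
  [Fintype ι] {Z : ι → Ω → α}

lemma Exchangeable.measure_rank_eq (hZ : Exchangeable μ Z) (hmeas : ∀ i, Measurable (Z i))
    (j j' : ι) (k : ℕ) : μ {ω | rank (Z · ω) j = k} = μ {ω | rank (Z · ω) j' = k} := by
  classical
  have hS : MeasurableSet {v : ι → α | rank v j = k} :=
    measurable_rank j (measurableSet_singleton k)
  have hswap : ∀ ω, rank (fun i => Z (Equiv.swap j j' i) ω) j = rank (Z · ω) j' := fun ω => by
    rw [rank_comp_perm (Z · ω), Equiv.swap_apply_left]
  have h := congrArg (· {v : ι → α | rank v j = k}) (hZ (Equiv.swap j j'))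
  simp only [Measure.map_apply (measurable_pi_lambda _ fun i => hmeas _) hS,
    Set.preimage_ofPred_eq, hswap] at h
  exact h.symm

theorem Exchangeable.measure_rank_eq_inv_card [IsProbabilityMeasure μ] (hZ : Exchangeable μ Z)
    (hmeas : ∀ i, Measurable (Z i)) (hdist : ∀ i j, i ≠ j → μ {ω | Z i ω = Z j ω} = 0) (j : ι)
    {k : ℕ} (hk1 : 1 ≤ k) (hk2 : k ≤ Fintype.card ι) :
    μ {ω | rank (Z · ω) j = k} = (Fintype.card ι : ℝ≥0∞)⁻¹ := by
  have hsum : ∑ j', μ {ω | rank (Z · ω) j' = k} = 1 :=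
    sum_measure_eq_one_of_ae_existsUnique
      (fun j' => (((measurable_rank j').comp (measurable_pi_lambda _ hmeas))
        (measurableSet_singleton k)).nullMeasurableSet)
      ((ae_injective_of_measure_eq_null hdist).mono fun ω hω => existsUnique_rank_eq hω hk1 hk2)
  simp_rw [hZ.measure_rank_eq hmeas _ j, sum_const, card_univ, nsmul_eq_mul] at hsum
  exact ENNReal.eq_inv_of_mul_eq_one_left (by rwa [mul_comm])

end Probability

/-- If `Z 0, ..., Z n` are exchangeable real-valued random variables that are almost
surely distinct, then the rank of the last one among all of them is uniformly
distributed on `{1, ..., n+1}`. -/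
theorem stmt0 {Ω : Type*} [MeasurableSpace Ω] (μ : Measure Ω) [IsProbabilityMeasure μ]
    (n : ℕ) (Z : Fin (n + 1) → Ω → ℝ) (hmeas : ∀ i, Measurable (Z i))
    (hexch : ∀ e : Equiv.Perm (Fin (n + 1)),
      Measure.map (fun ω (i : Fin (n + 1)) => Z (e i) ω) μ =
        Measure.map (fun ω (i : Fin (n + 1)) => Z i ω) μ)
    (hdist : ∀ i j, i ≠ j → μ {ω | Z i ω = Z j ω} = 0)
    (k : ℕ) (hk1 : 1 ≤ k) (hk2 : k ≤ n + 1) :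
    μ {ω | (Finset.univ.filter fun i => Z i ω ≤ Z (Fin.last n) ω).card = k} =
      1 / (n + 1) := by
  have h := Exchangeable.measure_rank_eq_inv_card (μ := μ) hexch hmeas hdist (Fin.last n) hk1
    (by rwa [Fintype.card_fin])
  rw [Fintype.card_fin, Nat.cast_add_one, ← one_div] at h
  exact h
end

section
/- Let σ_1, ..., σ_{n+1} be exchangeable real-valued random variables. Let σ_{(1)} ≤ ... ≤ σ_{(n)} be the order statistics of σ_1,...,σ_n, and let α ∈ (0,1) with ⌈(n+1)α⌉ - 1 ≥ 1. Then P(σ_{n+1} ≥ σ_{(⌈(n+1)α⌉ - 1)}) ≥ 1 - α. -/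
open MeasureTheory Finset

lemma rank_card_le {N : ℕ} (v : Fin N → ℝ) (m : ℕ) :
    #(univ.filter (fun j => #(univ.filter (fun i => v i ≤ v j)) ≤ m)) ≤ m := by
  set S := univ.filter (fun j => #(univ.filter (fun i => v i ≤ v j)) ≤ m) with hS
  rcases S.eq_empty_or_nonempty with h | h
  · simp [h]
  · obtain ⟨j, hjS, hmax⟩ := S.exists_max_image v h
    calc #S ≤ #(univ.filter (fun i => v i ≤ v j)) := by
          apply Finset.card_le_card
          intro a ha; simp only [mem_filter, mem_univ, true_and]; exact hmax a ha
      _ ≤ m := by simpa [hS] using (Finset.mem_filter.mp hjS).2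

lemma rnk_comp {N : ℕ} (v : Fin N → ℝ) (e : Equiv.Perm (Fin N)) (x : ℝ) :
    #(univ.filter fun i => v (e i) ≤ x) = #(univ.filter fun i => v i ≤ x) := by
  apply Finset.card_bij (fun i _ => e i)
  · intro a ha; simp_all
  · intro a _ b _ h; exact e.injective h
  · intro b hb; exact ⟨e.symm b, by simp_all, by simp⟩

lemma sort_le_iff {N : ℕ} (w : Fin N → ℝ) (k : Fin N) (x : ℝ) :
    w (Tuple.sort w k) ≤ x ↔ (k : ℕ) + 1 ≤ #(univ.filter (fun i => w i ≤ x)) := by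
  have hmono := Tuple.monotone_sort w
  constructor
  · intro h
    calc (k : ℕ) + 1 = #(Iic k) := (Fin.card_Iic k).symm
      _ ≤ #(univ.filter (fun j => w (Tuple.sort w j) ≤ x)) := by
          apply Finset.card_le_card
          intro j hj
          simp only [mem_filter, mem_univ, true_and]
          exact le_trans (hmono (mem_Iic.mp hj)) h
      _ = #(univ.filter (fun i => w i ≤ x)) := rnk_comp w (Tuple.sort w) x
  · intro h
    rw [← rnk_comp w (Tuple.sort w) x] at h
    by_contra hc
    have hsub : univ.filter (fun j => w (Tuple.sort w j) ≤ x) ⊆ Iio k := by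
      intro j hj
      simp only [mem_filter, mem_univ, true_and] at hj
      rw [mem_Iio]
      by_contra hjk
      push_neg at hjk
      exact hc (le_trans (hmono hjk) hj)
    have := Finset.card_le_card hsub
    rw [Fin.card_Iio] at this
    omega

/-- Split-conformal coverage: for exchangeable scores `σ 0, ..., σ n`, the last score
exceeds the `(⌈(n+1)α⌉ - 1)`-th order statistic of the first `n` scores with
probability at least `1 - α`. -/
theorem stmt2 {Ω : Type*} [MeasurableSpace Ω] (μ : Measure Ω) [IsProbabilityMeasure μ]
    (n : ℕ) (σ : Fin (n + 1) → Ω → ℝ) (hmeas : ∀ i, Measurable (σ i))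
    (hexch : ∀ e : Equiv.Perm (Fin (n + 1)),
      Measure.map (fun ω (i : Fin (n + 1)) => σ (e i) ω) μ =
        Measure.map (fun ω (i : Fin (n + 1)) => σ i ω) μ)
    (α : ℝ) (hα : α ∈ Set.Ioo (0 : ℝ) 1)
    (m : ℕ) (hm : m = ⌈((n : ℝ) + 1) * α⌉₊ - 1) (hm1 : 1 ≤ m) (hmn : m ≤ n) :
    ENNReal.ofReal (1 - α) ≤
      μ {ω | (fun i : Fin n => σ i.castSucc ω)
          (Tuple.sort (fun i : Fin n => σ i.castSucc ω) ⟨m - 1, by omega⟩)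
          ≤ σ (Fin.last n) ω} := by
  classical
  obtain ⟨hα0, hα1⟩ := hα
  -- the rank functional and its sublevel set
  set R : (Fin (n + 1) → ℝ) → ℕ :=
    fun v => #(univ.filter (fun i => v i ≤ v (Fin.last n))) with hR
  have hRmeas : Measurable R := by
    rw [hR]
    simp_rw [Finset.card_filter]
    apply Finset.measurable_sum
    intro i _
    exact Measurable.ite
      (measurableSet_le (measurable_pi_apply i) (measurable_pi_apply (Fin.last n)))
      measurable_const measurable_const
  set B : Set (Fin (n + 1) → ℝ) := R ⁻¹' Set.Iic m with hB
  have hBmeas : MeasurableSet B := hRmeas measurableSet_Iic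
  -- the family of bad events
  set A : Fin (n + 1) → Set Ω :=
    fun j => (fun ω (i : Fin (n + 1)) => σ ((Equiv.swap j (Fin.last n)) i) ω) ⁻¹' B with hA
  have hTe : ∀ e : Equiv.Perm (Fin (n + 1)),
      Measurable (fun ω (i : Fin (n + 1)) => σ (e i) ω) :=
    fun e => measurable_pi_lambda _ (fun i => hmeas (e i))
  have hAmeas : ∀ j, MeasurableSet (A j) :=
    fun j => hTe (Equiv.swap j (Fin.last n)) hBmeas
  -- characterization of A j
  have hAchar : ∀ j ω, ω ∈ A j ↔ #(univ.filter (fun i => σ i ω ≤ σ j ω)) ≤ m := by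
    intro j ω
    simp only [hA, Set.mem_preimage, hB, Set.mem_preimage, Set.mem_Iic, hR]
    have h1 := rnk_comp (fun i => σ i ω) (Equiv.swap j (Fin.last n)) (σ j ω)
    simp only [Equiv.swap_apply_right]
    rw [h1]
  -- all A j have the same probability
  have hAconst : ∀ j, μ (A j) = μ (A (Fin.last n)) := by
    intro j
    have h1 : μ (A j)
        = (Measure.map (fun ω (i : Fin (n + 1)) => σ ((Equiv.swap j (Fin.last n)) i) ω) μ) B :=
      (Measure.map_apply (hTe _) hBmeas).symm
    have hT : Measurable (fun ω (i : Fin (n + 1)) => σ i ω) :=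
      measurable_pi_lambda _ hmeas
    have h2 : μ (A (Fin.last n))
        = (Measure.map (fun ω (i : Fin (n + 1)) => σ i ω) μ) B := by
      rw [Measure.map_apply hT hBmeas]
      congr 1
      simp [hA, Equiv.swap_self]
    rw [h1, h2, hexch]
  -- the counting bound
  have hsum : ∑ j : Fin (n + 1), μ (A j) ≤ (m : ENNReal) := by
    calc ∑ j : Fin (n + 1), μ (A j)
        = ∑ j : Fin (n + 1), ∫⁻ ω, (A j).indicator 1 ω ∂μ :=
          Finset.sum_congr rfl
            (fun j _ => (lintegral_indicator_one (hAmeas j)).symm)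
      _ = ∫⁻ ω, ∑ j : Fin (n + 1), (A j).indicator 1 ω ∂μ :=
          (lintegral_finset_sum _
            (fun j _ => measurable_const.indicator (hAmeas j))).symm
      _ ≤ ∫⁻ _, (m : ENNReal) ∂μ := by
          apply lintegral_mono
          intro ω
          dsimp only
          have hpt : ∑ j : Fin (n + 1), (A j).indicator (1 : Ω → ENNReal) ω
              = (#(univ.filter (fun j : Fin (n + 1) =>
                  #(univ.filter (fun i => σ i ω ≤ σ j ω)) ≤ m)) : ENNReal) := by
            rw [← Finset.sum_boole]
            apply Finset.sum_congr rfl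
            intro j _
            by_cases hj : ω ∈ A j
            · rw [Set.indicator_of_mem hj, if_pos ((hAchar j ω).mp hj)]; rfl
            · rw [Set.indicator_of_notMem hj,
                if_neg (fun hc => hj ((hAchar j ω).mpr hc))]
          rw [hpt]
          exact_mod_cast rank_card_le (fun i => σ i ω) m
      _ = (m : ENNReal) := by simp
  have hAle : ((n : ENNReal) + 1) * μ (A (Fin.last n)) ≤ (m : ENNReal) := by
    calc ((n : ENNReal) + 1) * μ (A (Fin.last n))
        = ∑ _j : Fin (n + 1), μ (A (Fin.last n)) := by
          rw [Finset.sum_const, Finset.card_univ, Fintype.card_fin, nsmul_eq_mul]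
          push_cast
          ring
      _ = ∑ j : Fin (n + 1), μ (A j) :=
          Finset.sum_congr rfl (fun j _ => (hAconst j).symm)
      _ ≤ (m : ENNReal) := hsum
  -- real-number bound on m
  have hceil2 : 2 ≤ ⌈((n : ℝ) + 1) * α⌉₊ := by omega
  have hmr : (m : ℝ) < ((n : ℝ) + 1) * α := by
    have hx : (0 : ℝ) ≤ ((n : ℝ) + 1) * α := by positivity
    have hlt := Nat.ceil_lt_add_one hx
    have hmc : (m : ℝ) = (⌈((n : ℝ) + 1) * α⌉₊ : ℝ) - 1 := by
      rw [hm, Nat.cast_sub (by omega)]; simp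
    linarith
  have hcast : (m : ENNReal) ≤ ((n : ENNReal) + 1) * ENNReal.ofReal α := by
    have h1 : (m : ENNReal) = ENNReal.ofReal (m : ℝ) := by
      rw [ENNReal.ofReal_natCast]
    have h2 : ((n : ENNReal) + 1) * ENNReal.ofReal α
        = ENNReal.ofReal (((n : ℝ) + 1) * α) := by
      rw [ENNReal.ofReal_mul (by positivity)]
      congr 1
      rw [show ((n : ℝ) + 1) = ((n + 1 : ℕ) : ℝ) by push_cast; ring,
        ENNReal.ofReal_natCast]
      push_cast
      ring
    rw [h1, h2]
    exact ENNReal.ofReal_le_ofReal hmr.le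
  have hμA : μ (A (Fin.last n)) ≤ ENNReal.ofReal α := by
    have hne : ((n : ENNReal) + 1) ≠ 0 := by simp
    have htop : ((n : ENNReal) + 1) ≠ ⊤ :=
      ENNReal.add_ne_top.mpr ⟨ENNReal.natCast_ne_top n, ENNReal.one_ne_top⟩
    exact (ENNReal.mul_le_mul_iff_right hne htop).mp (le_trans hAle hcast)
  -- the target event is the complement of A (last n)
  have hEvent : {ω | (fun i : Fin n => σ i.castSucc ω)
          (Tuple.sort (fun i : Fin n => σ i.castSucc ω) ⟨m - 1, by omega⟩)
          ≤ σ (Fin.last n) ω} = (A (Fin.last n))ᶜ := by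
    ext ω
    simp only [Set.mem_setOf_eq, Set.mem_compl_iff]
    rw [hAchar (Fin.last n) ω]
    rw [sort_le_iff (fun i : Fin n => σ i.castSucc ω) ⟨m - 1, by omega⟩ (σ (Fin.last n) ω)]
    have hcount : #(univ.filter (fun i : Fin (n + 1) => σ i ω ≤ σ (Fin.last n) ω))
        = #(univ.filter (fun i : Fin n => σ i.castSucc ω ≤ σ (Fin.last n) ω)) + 1 := by
      rw [Finset.card_filter, Finset.card_filter, Fin.sum_univ_castSucc]
      simp
    rw [hcount]
    simp only [Fin.val_mk]
    omega
  rw [hEvent, prob_compl_eq_one_sub (hAmeas (Fin.last n))]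
  calc ENNReal.ofReal (1 - α) = 1 - ENNReal.ofReal α := by
        rw [ENNReal.ofReal_sub 1 hα0.le, ENNReal.ofReal_one]
    _ ≤ 1 - μ (A (Fin.last n)) := tsub_le_tsub_left hμA 1
end

section
/- Let X_1, ..., X_n, X_{n+1} be i.i.d. random elements of a measurable space Ω, let n_1 < n, and let g: Ω → ℝ be a measurable function that depends only on X_1, ..., X_{n_1}. Set σ_i = g(X_{n_1+i}) for i = 1, ..., n_2 where n_2 = n - n_1, let σ_{(1)} ≤ ... ≤ σ_{(n_2)} be their order statistics, and define C_n = {x ∈ Ω : g(x) ≥ σ_{(⌈(n_2+1)α⌉ - 1)}} (assuming ⌈(n_2+1)α⌉ - 1 ≥ 1). Then P(X_{n+1} ∈ C_n) ≥ 1 - α. -/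
/-!
Append the test score to the `n₂` calibration scores. The `n₂ + 1` scored points are i.i.d. and
independent of the training points, the only ones the score function depends on, so the score
vector is exchangeable: every index has the same probability of rank `≤ m` (rank = number of
scores below or equal to it). At most `m` indices can have rank `≤ m` at once, so this
probability is at most `m / (n₂ + 1) ≤ α`. If the test point is not covered, fewer than `m`
calibration scores lie below the test score, i.e. the test score has rank `≤ m`.
-/

open MeasureTheory Finset
open scoped ENNReal

namespace ConformalPrediction

section Rank

variable {ι α : Type*} [Fintype ι] [LinearOrder α]

def rank (z : ι → α) (k : ι) : ℕ := #{i | z i ≤ z k}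

theorem card_filter_comp_perm (p : ι → Prop) [DecidablePred p] (σ : Equiv.Perm ι) :
    #{i | p (σ i)} = #{i | p i} :=
  card_equiv σ fun i => by simp

theorem rank_comp_perm (z : ι → α) (σ : Equiv.Perm ι) (k : ι) :
    rank (z ∘ σ) k = rank z (σ k) :=
  card_filter_comp_perm (fun i => z i ≤ z (σ k)) σ

theorem card_rank_le_le (z : ι → α) (m : ℕ) : #{k | rank z k ≤ m} ≤ m := by
  obtain h | h := (univ.filter fun k => rank z k ≤ m).eq_empty_or_nonempty
  · simp [h]
  -- every member of the set scores at most as high as its top-scoring member `k`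
  obtain ⟨k, hk, hmax⟩ := exists_max_image _ z h
  calc #{k | rank z k ≤ m} ≤ rank z k :=
        card_le_card fun j hj => mem_filter.2 ⟨mem_univ j, hmax j hj⟩
    _ ≤ m := (mem_filter.1 hk).2

theorem rank_snoc_last {N : ℕ} (f : Fin N → α) (t : α) :
    rank (Fin.snoc f t : Fin (N + 1) → α) (Fin.last N) = #{i | f i ≤ t} + 1 := by
  simp only [rank, card_filter, Fin.sum_univ_castSucc, Fin.snoc_castSucc, Fin.snoc_last,
    le_refl, if_true]

theorem apply_sort_le_of_lt_card {N : ℕ} (f : Fin N → α) {t : α} {j : Fin N}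
    (h : (j : ℕ) < #{i | f i ≤ t}) : f (Tuple.sort f j) ≤ t := by
  refine (Tuple.lt_card_le_iff_apply_le_of_monotone (f := f ∘ Tuple.sort f)
    (Tuple.monotone_sort f)).1 ?_
  simp only [Function.comp_apply]
  rwa [card_filter_comp_perm (fun i => f i ≤ t)]

end Rank

section Exchangeable

variable {ι : Type*} [Fintype ι]

theorem measurable_rank (k : ι) : Measurable fun z : ι → ℝ => rank z k := by
  simp only [rank, card_filter]
  exact Finset.measurable_sum _ fun i _ =>
    Measurable.ite (measurableSet_le (measurable_pi_apply i) (measurable_pi_apply k))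
      measurable_const measurable_const

theorem measurableSet_rank_le (k : ι) (m : ℕ) : MeasurableSet {z : ι → ℝ | rank z k ≤ m} :=
  measurable_rank k measurableSet_Iic

theorem card_mul_measure_rank_le_le (ρ : Measure (ι → ℝ))
    (hρ : ∀ σ : Equiv.Perm ι, ρ.map (· ∘ σ) = ρ) (k : ι) (m : ℕ) :
    Fintype.card ι * ρ {z | rank z k ≤ m} ≤ m * ρ Set.univ := by
  classical
  set B : ι → Set (ι → ℝ) := fun l => {z | rank z l ≤ m}
  have hB : ∀ l, MeasurableSet (B l) := fun l => measurableSet_rank_le l m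
  have hsame : ∀ l, ρ (B l) = ρ (B k) := by
    intro l
    have hpre : B l = (· ∘ Equiv.swap k l) ⁻¹' B k := by
      ext z
      simp only [B, Set.mem_preimage, Set.mem_ofPred_eq, rank_comp_perm, Equiv.swap_apply_left]
    rw [hpre, ← Measure.map_apply (by fun_prop) (hB k), hρ]
  have hcount : ∀ z, ∑ l, (B l).indicator 1 z ≤ (m : ℝ≥0∞) := by
    intro z
    simp only [Set.indicator_apply, Pi.one_apply]
    rw [sum_boole]
    exact_mod_cast card_rank_le_le z m
  calc Fintype.card ι * ρ (B k) = ∑ l, ρ (B l) := by simp [hsame]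
    _ = ∫⁻ z, ∑ l, (B l).indicator 1 z ∂ρ := by
      rw [lintegral_finsetSum _ fun l _ => measurable_one.indicator (hB l)]
      simp only [lintegral_indicator_one (hB _)]
    _ ≤ ∫⁻ _, (m : ℝ≥0∞) ∂ρ := lintegral_mono hcount
    _ = m * ρ Set.univ := lintegral_const _

theorem ofReal_one_sub_le_measure_lt_rank (ρ : Measure (ι → ℝ)) [IsProbabilityMeasure ρ]
    (hρ : ∀ σ : Equiv.Perm ι, ρ.map (· ∘ σ) = ρ) (k : ι) {m : ℕ} {α : ℝ} (hα : 0 ≤ α)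
    (hm : (m : ℝ) ≤ Fintype.card ι * α) :
    ENNReal.ofReal (1 - α) ≤ ρ {z | m < rank z k} := by
  have : Nonempty ι := ⟨k⟩
  have hcard : (Fintype.card ι : ℝ≥0∞) ≠ 0 := by simp
  have hle : ρ {z | rank z k ≤ m} ≤ ENNReal.ofReal α := by
    refine (ENNReal.mul_le_mul_iff_right hcard (ENNReal.natCast_ne_top _)).1 ?_
    calc Fintype.card ι * ρ {z | rank z k ≤ m} ≤ m := by
          simpa using card_mul_measure_rank_le_le ρ hρ k m
      _ = ENNReal.ofReal m := (ENNReal.ofReal_natCast m).symm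
      _ ≤ ENNReal.ofReal (Fintype.card ι * α) := ENNReal.ofReal_le_ofReal hm
      _ = Fintype.card ι * ENNReal.ofReal α := by
          rw [ENNReal.ofReal_mul (Nat.cast_nonneg _), ENNReal.ofReal_natCast]
  have hcompl : {z : ι → ℝ | m < rank z k} = {z | rank z k ≤ m}ᶜ := by
    ext z; simp
  rw [hcompl, prob_compl_eq_one_sub (measurableSet_rank_le k m),
    ENNReal.ofReal_sub _ hα, ENNReal.ofReal_one]
  exact tsub_le_tsub_left hle 1

end Exchangeable

section SplitScores

variable {ι κ τ S : Type*}

-- `d` selects the training points on which `G` is fitted, `c` the points to be scored.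
def splitScores (d : τ → ι) (c : κ → ι) (G : (τ → S) → S → ℝ) (x : ι → S) (k : κ) : ℝ :=
  G (x ∘ d) (x (c k))

theorem splitScores_comp_viaFintypeEmbedding [Fintype κ] [DecidableEq ι] {d : τ → ι} (c : κ ↪ ι)
    (hdc : ∀ j k, d j ≠ c k) (G : (τ → S) → S → ℝ) (σ : Equiv.Perm κ) (x : ι → S) :
    splitScores d c G (x ∘ σ.viaFintypeEmbedding c) = splitScores d c G x ∘ σ := by
  have hd : (x ∘ σ.viaFintypeEmbedding c) ∘ d = x ∘ d := funext fun j => congrArg x <|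
    Equiv.Perm.viaFintypeEmbedding_apply_notMem_range _ _ fun ⟨k, hk⟩ => hdc j k hk.symm
  funext k
  simp only [splitScores, Function.comp_apply, Equiv.Perm.viaFintypeEmbedding_apply_image, hd]

variable [MeasurableSpace S]

theorem measurePreserving_comp_perm [Fintype ι] (ν : Measure S) [SigmaFinite ν]
    (e : Equiv.Perm ι) :
    MeasurePreserving (fun x : ι → S => x ∘ e) (Measure.pi fun _ => ν) (Measure.pi fun _ => ν) :=
  measurePreserving_arrowCongr' (fun _ => ν) (fun _ => ν) e.symm (MeasurableEquiv.refl S)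
    fun _ => MeasurePreserving.id ν

theorem measurable_splitScores (d : τ → ι) (c : κ → ι) {G : (τ → S) → S → ℝ}
    (hG : Measurable fun q : (τ → S) × S => G q.1 q.2) : Measurable (splitScores d c G) :=
  measurable_pi_lambda _ fun k => hG.comp (f := fun x => (x ∘ d, x (c k))) <|
    (measurable_pi_lambda _ fun j => measurable_pi_apply (d j)).prodMk (measurable_pi_apply (c k))

theorem map_splitScores_comp_perm [Fintype ι] [Fintype κ] {d : τ → ι} (c : κ ↪ ι)
    (hdc : ∀ j k, d j ≠ c k) {G : (τ → S) → S → ℝ}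
    (hG : Measurable fun q : (τ → S) × S => G q.1 q.2) (ν : Measure S) [SigmaFinite ν]
    (σ : Equiv.Perm κ) :
    ((Measure.pi fun _ => ν).map (splitScores d c G)).map (· ∘ σ) =
      (Measure.pi fun _ => ν).map (splitScores d c G) := by
  classical
  set e := σ.viaFintypeEmbedding c
  conv_rhs => rw [← (measurePreserving_comp_perm ν e).map_eq]
  rw [Measure.map_map (by fun_prop) (measurable_splitScores d c hG),
    Measure.map_map (measurable_splitScores d c hG) (measurePreserving_comp_perm ν e).measurable]
  congr 1
  funext x
  exact (splitScores_comp_viaFintypeEmbedding c hdc G σ x).symm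

theorem ofReal_one_sub_le_measure_lt_rank_splitScores {Ω : Type*} [MeasurableSpace Ω]
    {μ : Measure Ω} [IsProbabilityMeasure μ] [Fintype ι] [Fintype κ] {X : ι → Ω → S}
    (hmeas : ∀ i, Measurable (X i)) {ν : Measure S} (hident : ∀ i, μ.map (X i) = ν)
    (hindep : ProbabilityTheory.iIndepFun X μ) {d : τ → ι} (c : κ ↪ ι) (hdc : ∀ j k, d j ≠ c k)
    {G : (τ → S) → S → ℝ} (hG : Measurable fun q : (τ → S) × S => G q.1 q.2) (k : κ) {m : ℕ}
    {α : ℝ} (hα : 0 ≤ α) (hm : (m : ℝ) ≤ Fintype.card κ * α) :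
    ENNReal.ofReal (1 - α) ≤ μ {ω | m < rank (splitScores d c G fun i => X i ω) k} := by
  have : IsProbabilityMeasure ν :=
    hident (c k) ▸ Measure.isProbabilityMeasure_map (hmeas (c k)).aemeasurable
  have hX : Measurable fun ω i => X i ω := measurable_pi_lambda _ hmeas
  have hscores := (measurable_splitScores d c hG).comp hX
  have hlaw : μ.map (splitScores d c G ∘ fun ω i => X i ω) =
      (Measure.pi fun _ => ν).map (splitScores d c G) := by
    rw [← Measure.map_map (measurable_splitScores d c hG) hX,
      hindep.map_fun_eq_pi_map fun i => (hmeas i).aemeasurable]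
    simp only [hident]
  have : IsProbabilityMeasure (μ.map (splitScores d c G ∘ fun ω i => X i ω)) :=
    Measure.isProbabilityMeasure_map hscores.aemeasurable
  calc ENNReal.ofReal (1 - α)
      ≤ μ.map (splitScores d c G ∘ fun ω i => X i ω) {z | m < rank z k} :=
        ofReal_one_sub_le_measure_lt_rank _ (hlaw ▸ map_splitScores_comp_perm c hdc hG ν) k hα hm
    _ = _ := Measure.map_apply hscores (measurable_rank k measurableSet_Ioi)

end SplitScores

end ConformalPrediction

open ConformalPrediction

/-- Inductive (split) conformal predictor: with i.i.d. data `X 0, ..., X n`, a score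
function `g = G(X 0, ..., X (n₁-1))` built from the training split, calibration scores
`σ i = g (X (n₁ + i))` for `i < n₂ = n - n₁`, and threshold the
`(⌈(n₂+1)α⌉-1)`-th order statistic of the calibration scores, the prediction set
`C = {x : g x ≥ threshold}` covers `X n` (the fresh point) with probability `≥ 1 - α`. -/
theorem stmt3 {Ω S : Type*} [MeasurableSpace Ω] [MeasurableSpace S]
    (μ : Measure Ω) [IsProbabilityMeasure μ]
    (n n₁ : ℕ) (hn₁ : n₁ < n)
    (X : Fin (n + 1) → Ω → S) (hmeas : ∀ i, Measurable (X i))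
    (ν : Measure S) (hident : ∀ i, Measure.map (X i) μ = ν)
    (hindep : ProbabilityTheory.iIndepFun X μ)
    (G : (Fin n₁ → S) → S → ℝ)
    (hG : Measurable fun q : (Fin n₁ → S) × S => G q.1 q.2)
    (α : ℝ) (hα : α ∈ Set.Ioo (0 : ℝ) 1)
    (n₂ : ℕ) (hn₂ : n₂ = n - n₁)
    (m : ℕ) (hm : m = ⌈((n₂ : ℝ) + 1) * α⌉₊ - 1) (hm1 : 1 ≤ m) (hmn : m ≤ n₂) :
    ENNReal.ofReal (1 - α) ≤
      μ {ω | (fun i : Fin n₂ =>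
            G (fun j : Fin n₁ => X ⟨j, by omega⟩ ω) (X ⟨n₁ + i, by omega⟩ ω))
          (Tuple.sort (fun i : Fin n₂ =>
            G (fun j : Fin n₁ => X ⟨j, by omega⟩ ω) (X ⟨n₁ + i, by omega⟩ ω)) ⟨m - 1, by omega⟩)
          ≤ G (fun j : Fin n₁ => X ⟨j, by omega⟩ ω) (X (Fin.last n) ω)} := by
  let d : Fin n₁ → Fin (n + 1) := fun j => ⟨j, by omega⟩
  let c : Fin (n₂ + 1) ↪ Fin (n + 1) :=
    ⟨fun k => ⟨n₁ + k, by omega⟩, fun a b h => Fin.ext (by simpa using congrArg Fin.val h)⟩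
  have hdc : ∀ j k, d j ≠ c k := fun j k h => by
    have : (j : ℕ) = n₁ + k := congrArg Fin.val h
    omega
  have hmα : (m : ℝ) ≤ Fintype.card (Fin (n₂ + 1)) * α := by
    rw [Fintype.card_fin, Nat.cast_add_one]
    exact (Nat.lt_ceil.1 (by omega)).le
  refine (ofReal_one_sub_le_measure_lt_rank_splitScores hmeas hident hindep c hdc hG
    (Fin.last n₂) hα.1.le hmα).trans (measure_mono fun ω hω => ?_)
  rw [Set.mem_ofPred_eq] at hω ⊢
  set f : Fin n₂ → ℝ := fun i => G (fun j : Fin n₁ => X ⟨j, by omega⟩ ω) (X ⟨n₁ + i, by omega⟩ ω)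
  set t : ℝ := G (fun j : Fin n₁ => X ⟨j, by omega⟩ ω) (X (Fin.last n) ω)
  have hsnoc : (splitScores d c G fun i => X i ω) = Fin.snoc f t := by
    funext k
    refine Fin.lastCases ?_ (fun i => ?_) k
    · rw [Fin.snoc_last]
      show G _ (X ⟨n₁ + n₂, _⟩ ω) = _
      rw [show (⟨n₁ + n₂, _⟩ : Fin (n + 1)) = Fin.last n from Fin.ext (by simp; omega)]
      rfl
    · rw [Fin.snoc_castSucc]
      rfl
  rw [hsnoc, rank_snoc_last] at hω
  exact apply_sort_le_of_lt_card f (by simp only; omega)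
end

section
/- Let f(ξ) = Σ_{k=1}^K π_k φ_k(ξ) be a finite mixture of nonnegative functions φ_k : ℝ^p → [0,∞) with weights π_k > 0. For each k define δ_k = Σ_{s ≠ k} sup_ξ min(π_k φ_k(ξ), π_s φ_s(ξ)). Then for any λ > 0 with δ_k < λ for all k, the level set {ξ : f(ξ) ≥ λ} is contained in the union over k of {ξ : φ_k(ξ) ≥ (λ - δ_k)/π_k}. -/
/-- Refined outer approximation of a mixture level set: with overlaps
`δ_k = Σ_{s ≠ k} sup_ξ min(w_k φ_k(ξ), w_s φ_s(ξ))`, if `δ_k < λ` for all `k`, then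
`{ξ : f(ξ) ≥ λ} ⊆ ⋃_k {ξ : φ_k(ξ) ≥ (λ - δ_k)/w_k}`. -/
theorem stmt6 (p K : ℕ) (φ : Fin K → (Fin p → ℝ) → ℝ) (w : Fin K → ℝ)
    (hφ : ∀ k ξ, 0 ≤ φ k ξ) (hw : ∀ k, 0 < w k)
    (hbdd : ∀ k s : Fin K,
      BddAbove (Set.range fun ξ : Fin p → ℝ => min (w k * φ k ξ) (w s * φ s ξ)))
    (δ : Fin K → ℝ)
    (hδ : ∀ k, δ k = ∑ s ∈ Finset.univ.erase k,
      ⨆ ξ : Fin p → ℝ, min (w k * φ k ξ) (w s * φ s ξ))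
    (lev : ℝ) (hlev : 0 < lev) (hsep : ∀ k, δ k < lev) :
    {ξ : Fin p → ℝ | lev ≤ ∑ k, w k * φ k ξ} ⊆
      ⋃ k : Fin K, {ξ : Fin p → ℝ | (lev - δ k) / w k ≤ φ k ξ} := by
  intro ξ hξ
  simp only [Set.mem_setOf_eq] at hξ
  -- K is nonempty
  have hKpos : 0 < K := by
    by_contra h
    push_neg at h
    interval_cases K
    simp at hξ
    linarith
  haveI : Nonempty (Fin K) := ⟨⟨0, hKpos⟩⟩
  -- pick k maximizing w k * φ k ξ
  obtain ⟨k, -, hk⟩ := Finset.exists_max_image Finset.univ (fun k => w k * φ k ξ)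
    ⟨⟨0, hKpos⟩, Finset.mem_univ _⟩
  refine Set.mem_iUnion.2 ⟨k, ?_⟩
  simp only [Set.mem_setOf_eq]
  have hsum : ∑ s ∈ Finset.univ.erase k, w s * φ s ξ ≤ δ k := by
    rw [hδ k]
    apply Finset.sum_le_sum
    intro s hs
    have h1 : w s * φ s ξ = min (w k * φ k ξ) (w s * φ s ξ) := by
      rw [min_eq_right (hk s (Finset.mem_univ s))]
    rw [h1]
    exact le_ciSup (hbdd k s) ξ
  have hsplit : ∑ s, w s * φ s ξ =
      w k * φ k ξ + ∑ s ∈ Finset.univ.erase k, w s * φ s ξ := by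
    exact (Finset.add_sum_erase _ (fun s => w s * φ s ξ) (Finset.mem_univ k)).symm
  have : lev - δ k ≤ w k * φ k ξ := by linarith [hξ, hsplit ▸ hξ]
  rw [div_le_iff₀' (hw k)]
  linarith
end

section
/- Let K : [0,∞) → [0,∞) with K(z) ≤ K(0), d a metric on Ω, X_1,...,X_n ∈ Ω distinct, h > 0, and p̂(u) = (1/n) Σ_i K(d(u,X_i)/h). For f ∈ Ω let p̂^f(u) = (n/(n+1)) p̂(u) + (1/(n+1)) K(d(u,f)/h) and π(f) = (1 + #{i : p̂^f(X_i) ≤ p̂^f(f)})/(n+1). Let α ∈ (0,1) with nα an integer ≥ 1, order the data so that p̂(X_{(1)}) ≤ ... ≤ p̂(X_{(n)}), and set λ = p̂(X_{(nα)}). Then {f : π(f) ≥ α} ⊆ {f : p̂(f) ≥ λ − K(0)/n}. -/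
/-- The conformal prediction set based on the pseudo-density conformity score is
contained in the inflated level set of the pseudo-density estimator:
`{f : π(f) ≥ α} ⊆ {f : p̂(f) ≥ λ − K(0)/n}` where `λ = p̂(X_(nα))` is the `nα`-th
smallest pseudo-density value among the data points. -/
theorem stmt11 {Ω : Type*} [MetricSpace Ω] (n : ℕ) (X : Fin n → Ω)
    (hX : Function.Injective X)
    (K : ℝ → ℝ) (hK0 : ∀ z, 0 ≤ z → 0 ≤ K z) (hK : ∀ z, 0 ≤ z → K z ≤ K 0)
    (h : ℝ) (hh : 0 < h)
    (phat : Ω → ℝ) (hphat : ∀ u, phat u = (1 / n) * ∑ i, K (dist u (X i) / h))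
    (phatf : Ω → Ω → ℝ)
    (hphatf : ∀ f u,
      phatf f u = (n / (n + 1)) * phat u + (1 / (n + 1)) * K (dist u f / h))
    (pv : Ω → ℝ)
    (hpv : ∀ f, pv f =
      (1 + ((Finset.univ.filter fun i => phatf f (X i) ≤ phatf f f).card : ℝ)) / (n + 1))
    (α : ℝ) (hα : α ∈ Set.Ioo (0 : ℝ) 1)
    (m : ℕ) (hm : (m : ℝ) = n * α) (hm1 : 1 ≤ m) (hmn : m ≤ n)
    (τ : Equiv.Perm (Fin n)) (hτ : Monotone fun i => phat (X (τ i)))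
    (lev : ℝ) (hlev : lev = phat (X (τ ⟨m - 1, by omega⟩))) :
    {f | α ≤ pv f} ⊆ {f | lev - K 0 / n ≤ phat f} := by
  intro f hf
  simp only [Set.mem_setOf_eq] at hf ⊢
  have hn : 1 ≤ n := le_trans hm1 hmn
  have hn0 : (0:ℝ) < n := by exact_mod_cast hn
  set S := Finset.univ.filter fun i => phatf f (X i) ≤ phatf f f with hS
  have hcard : m ≤ S.card := by
    rw [hpv] at hf
    have hn1 : (0:ℝ) < (n:ℝ) + 1 := by linarith
    rw [le_div_iff₀ hn1] at hf
    have : (m:ℝ) < (S.card : ℝ) + 1 := by nlinarith [hα.1, hα.2]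
    exact_mod_cast Nat.lt_succ_iff.mp (by exact_mod_cast this)
  have hexists : ∃ i ∈ S, lev ≤ phat (X i) := by
    by_contra hcon
    push_neg at hcon
    have hsub : S ⊆ Finset.univ.filter fun i => phat (X i) < lev := by
      intro i hi
      simp only [Finset.mem_filter, Finset.mem_univ, true_and]
      exact hcon i hi
    have hmlt : m - 1 < n := by omega
    have hT : (Finset.univ.filter fun i => phat (X i) < lev).card ≤ m - 1 := by
      have hinj : ∀ i ∈ (Finset.univ.filter fun i => phat (X i) < lev),
          τ.symm i ∈ Finset.Iio (⟨m - 1, hmlt⟩ : Fin n) := by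
        intro i hi
        simp only [Finset.mem_filter, Finset.mem_univ, true_and] at hi
        simp only [Finset.mem_Iio]
        by_contra hge
        push_neg at hge
        have := hτ hge
        simp only at this
        rw [Equiv.apply_symm_apply] at this
        rw [hlev] at hi
        linarith
      have := Finset.card_le_card_of_injOn (fun i => τ.symm i) hinj
        (fun a _ b _ hab => τ.symm.injective hab)
      simpa [Fin.card_Iio] using this
    have := Finset.card_le_card hsub
    omega
  obtain ⟨i, hiS, hilev⟩ := hexists
  have hiS' : phatf f (X i) ≤ phatf f f := by
    rw [hS] at hiS
    simpa using hiS
  rw [hphatf, hphatf] at hiS'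
  have hd0 : dist f f / h = 0 := by simp
  rw [hd0] at hiS'
  have hKpos : 0 ≤ K (dist (X i) f / h) :=
    hK0 _ (by positivity)
  have hn1 : (0:ℝ) < (n:ℝ) + 1 := by linarith
  have hn1' : ((n:ℝ) + 1) ≠ 0 := ne_of_gt hn1
  have key : (n:ℝ) * phat (X i) + K (dist (X i) f / h) ≤ (n:ℝ) * phat f + K 0 := by
    have h2 := mul_le_mul_of_nonneg_right hiS' hn1.le
    calc (n:ℝ) * phat (X i) + K (dist (X i) f / h)
        = ((n:ℝ) / ((n:ℝ) + 1) * phat (X i) + 1 / ((n:ℝ) + 1) * K (dist (X i) f / h)) * ((n:ℝ)+1) := by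
          field_simp
      _ ≤ ((n:ℝ) / ((n:ℝ) + 1) * phat f + 1 / ((n:ℝ) + 1) * K 0) * ((n:ℝ)+1) := h2
      _ = (n:ℝ) * phat f + K 0 := by field_simp
  have hmain : (n:ℝ) * lev ≤ (n:ℝ) * phat f + K 0 := by nlinarith [hilev]
  rw [sub_le_iff_le_add]
  have h4 : lev ≤ ((n:ℝ) * phat f + K 0) / n := (le_div_iff₀ hn0).mpr (by nlinarith)
  have h5 : ((n:ℝ) * phat f + K 0) / n = phat f + K 0 / n := by field_simp
  linarith [h5.le, h5.ge]
end

section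
/- Let σ_1, ..., σ_{n+1} be exchangeable real random variables and define the p-value π = (1/(n+1)) Σ_{i=1}^{n+1} 1(σ_i ≤ σ_{n+1}). If the σ_i are almost surely distinct, then π is uniformly distributed on {1/(n+1), 2/(n+1), ..., 1}. -/
open MeasureTheory

/-- Exact distribution of the conformal p-value: for exchangeable, almost surely
distinct scores `σ 0, ..., σ n`, the p-value
`π = #{i : σ i ≤ σ (last)} / (n+1)` is uniform on `{1/(n+1), ..., 1}`. -/
theorem stmt18 {Ω : Type*} [MeasurableSpace Ω] (μ : Measure Ω) [IsProbabilityMeasure μ]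
    (n : ℕ) (σ : Fin (n + 1) → Ω → ℝ) (hmeas : ∀ i, Measurable (σ i))
    (hexch : ∀ e : Equiv.Perm (Fin (n + 1)),
      Measure.map (fun ω (i : Fin (n + 1)) => σ (e i) ω) μ =
        Measure.map (fun ω (i : Fin (n + 1)) => σ i ω) μ)
    (hdist : ∀ i j, i ≠ j → μ {ω | σ i ω = σ j ω} = 0)
    (pv : Ω → ℝ)
    (hpv : ∀ ω, pv ω =
      ((Finset.univ.filter fun i => σ i ω ≤ σ (Fin.last n) ω).card : ℝ) / (n + 1))
    (k : ℕ) (hk1 : 1 ≤ k) (hk2 : k ≤ n + 1) :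
    μ {ω | pv ω = k / (n + 1)} = 1 / (n + 1) := by
  classical
  -- counts and rank events
  set c : Fin (n + 1) → Ω → ℕ :=
    fun j ω => (Finset.univ.filter fun i => σ i ω ≤ σ j ω).card with hc
  set A : Fin (n + 1) → Set Ω := fun j => {ω | c j ω = k} with hA
  -- the target event is `A (Fin.last n)`
  have hev : {ω | pv ω = (k : ℝ) / (n + 1)} = A (Fin.last n) := by
    ext ω
    have hne : ((n : ℝ) + 1) ≠ 0 := by positivity
    simp only [hA, hc, Set.mem_setOf_eq, hpv ω]
    rw [div_eq_div_iff hne hne]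
    constructor
    · intro h
      have := mul_right_cancel₀ hne h
      exact_mod_cast this
    · intro h; rw [h]
  -- measurability of counts as real-valued functions
  have hcm : ∀ j, Measurable fun ω => ((c j ω : ℝ)) := by
    intro j
    have : (fun ω => ((c j ω : ℝ))) =
        fun ω => ∑ i, if σ i ω ≤ σ j ω then (1 : ℝ) else 0 := by
      funext ω
      rw [Finset.sum_boole]
    rw [this]
    exact Finset.measurable_sum _ fun i _ =>
      Measurable.ite (measurableSet_le (hmeas i) (hmeas j)) measurable_const measurable_const
  have hAm : ∀ j, MeasurableSet (A j) := by
    intro j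
    have : A j = (fun ω => ((c j ω : ℝ))) ⁻¹' {(k : ℝ)} := by
      ext ω
      simp only [hA, Set.mem_setOf_eq, Set.mem_preimage, Set.mem_singleton_iff, Nat.cast_inj]
    rw [this]
    exact (hcm j) (measurableSet_singleton _)
  -- exchangeability: all rank events have the same measure
  have key : ∀ j, μ (A j) = μ (A (Fin.last n)) := by
    intro j
    set e : Equiv.Perm (Fin (n + 1)) := Equiv.swap j (Fin.last n) with he
    set g : (Fin (n + 1) → ℝ) → ℝ :=
      fun x => ∑ i, if x i ≤ x (Fin.last n) then (1 : ℝ) else 0 with hg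
    have hgm : Measurable g :=
      Finset.measurable_sum _ fun i _ =>
        Measurable.ite (measurableSet_le (measurable_pi_apply i) (measurable_pi_apply _))
          measurable_const measurable_const
    set S : Set (Fin (n + 1) → ℝ) := g ⁻¹' {(k : ℝ)} with hS
    have hSm : MeasurableSet S := hgm (measurableSet_singleton _)
    have hjoint : Measurable fun ω (i : Fin (n + 1)) => σ i ω :=
      measurable_pi_lambda _ hmeas
    have hjoint' : Measurable fun ω (i : Fin (n + 1)) => σ (e i) ω :=
      measurable_pi_lambda _ fun i => hmeas _
    have hsum : ∀ (ω : Ω) (b : Fin (n + 1)),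
        (∑ i, if σ i ω ≤ σ b ω then (1 : ℝ) else 0) = (c b ω : ℝ) := by
      intro ω b
      rw [Finset.sum_boole]
    have h2 : (fun ω (i : Fin (n + 1)) => σ (e i) ω) ⁻¹' S = A j := by
      ext ω
      have helast : e (Fin.last n) = j := Equiv.swap_apply_right _ _
      have hre : (∑ i, if σ (e i) ω ≤ σ (e (Fin.last n)) ω then (1 : ℝ) else 0)
          = ∑ i, if σ i ω ≤ σ (e (Fin.last n)) ω then (1 : ℝ) else 0 :=
        Equiv.sum_comp e (fun i => if σ i ω ≤ σ (e (Fin.last n)) ω then (1 : ℝ) else 0)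
      simp only [Set.mem_preimage, hS, hg, Set.mem_singleton_iff, hA, Set.mem_setOf_eq]
      rw [hre, helast, hsum ω j, Nat.cast_inj]
    have h3 : (fun ω (i : Fin (n + 1)) => σ i ω) ⁻¹' S = A (Fin.last n) := by
      ext ω
      simp only [Set.mem_preimage, hS, hg, Set.mem_singleton_iff, hA, Set.mem_setOf_eq]
      rw [hsum ω (Fin.last n), Nat.cast_inj]
    calc μ (A j) = Measure.map (fun ω (i : Fin (n + 1)) => σ (e i) ω) μ S := by
          rw [Measure.map_apply hjoint' hSm, h2]
      _ = Measure.map (fun ω (i : Fin (n + 1)) => σ i ω) μ S := by rw [hexch e]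
      _ = μ (A (Fin.last n)) := by rw [Measure.map_apply hjoint hSm, h3]
  -- distinctness: the bad set is null
  set B : Set Ω := {ω | ¬ Function.Injective fun i => σ i ω} with hB
  have hBnull : μ B = 0 := by
    have hsub : B ⊆ ⋃ i, ⋃ j, ⋃ (_ : i ≠ j), {ω | σ i ω = σ j ω} := by
      intro ω hω
      simp only [hB, Function.Injective, not_forall, Set.mem_setOf_eq] at hω
      obtain ⟨i, j, h1, h2⟩ := hω
      exact Set.mem_iUnion.2 ⟨i, Set.mem_iUnion.2 ⟨j, Set.mem_iUnion.2 ⟨h2, h1⟩⟩⟩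
    exact measure_mono_null hsub
      (measure_iUnion_null fun i => measure_iUnion_null fun j =>
        measure_iUnion_null fun h => hdist i j h)
  -- strict monotonicity of counts
  have hmono : ∀ (ω : Ω) (a b : Fin (n + 1)), σ a ω < σ b ω → c a ω < c b ω := by
    intro ω a b hab
    apply Finset.card_lt_card
    rw [Finset.ssubset_iff_of_subset]
    · refine ⟨b, Finset.mem_filter.2 ⟨Finset.mem_univ _, le_refl _⟩, ?_⟩
      intro hmem
      exact absurd (Finset.mem_filter.1 hmem).2 (not_le.2 hab)
    · intro x hx
      rcases Finset.mem_filter.1 hx with ⟨_, hx2⟩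
      exact Finset.mem_filter.2 ⟨Finset.mem_univ _, hx2.trans hab.le⟩
  -- on the good set, exactly one rank event occurs
  have hexists : ∀ ω, ω ∉ B → ∃ j, ω ∈ A j := by
    intro ω hω
    simp only [hB, Set.mem_setOf_eq, not_not] at hω
    have hinj : Function.Injective fun j => c j ω := by
      intro a b hab
      by_contra hne
      rcases lt_trichotomy (σ a ω) (σ b ω) with h | h | h
      · exact absurd hab (hmono ω a b h).ne
      · exact hne (hω h)
      · exact absurd hab.symm (hmono ω b a h).ne
    have hlb : ∀ j, 1 ≤ c j ω := by
      intro j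
      have : j ∈ Finset.univ.filter fun i => σ i ω ≤ σ j ω :=
        Finset.mem_filter.2 ⟨Finset.mem_univ _, le_refl _⟩
      exact Finset.card_pos.2 ⟨j, this⟩
    have hub : ∀ j, c j ω ≤ n + 1 := by
      intro j
      calc c j ω ≤ Finset.univ.card := Finset.card_filter_le _ _
        _ = n + 1 := by simp
    have himg : Finset.univ.image (fun j => c j ω) = Finset.Icc 1 (n + 1) := by
      apply Finset.eq_of_subset_of_card_le
      · intro m hm
        rcases Finset.mem_image.1 hm with ⟨j, _, rfl⟩
        exact Finset.mem_Icc.2 ⟨hlb j, hub j⟩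
      · rw [Finset.card_image_of_injective _ hinj]
        simp
    have hk : k ∈ Finset.univ.image (fun j => c j ω) := by
      rw [himg]
      exact Finset.mem_Icc.2 ⟨hk1, hk2⟩
    rcases Finset.mem_image.1 hk with ⟨j, _, hj⟩
    exact ⟨j, hj⟩
  have hdisj : Pairwise (Function.onFun (AEDisjoint μ) A) := by
    intro a b hab
    refine measure_mono_null ?_ hBnull
    intro ω hω
    rcases hω with ⟨ha, hb⟩
    simp only [hA, Set.mem_setOf_eq] at ha hb
    simp only [hB, Set.mem_setOf_eq]
    intro hinj
    rcases lt_trichotomy (σ a ω) (σ b ω) with h | h | h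
    · exact absurd (ha.trans hb.symm) (hmono ω a b h).ne
    · exact hab (hinj h)
    · exact absurd (hb.trans ha.symm) (hmono ω b a h).ne
  -- the union has full measure
  have hcover : μ (⋃ j, A j) = 1 := by
    refine le_antisymm (le_trans (measure_mono (Set.subset_univ _)) measure_univ.le) ?_
    have hsub : (Set.univ : Set Ω) ⊆ (⋃ j, A j) ∪ B := by
      intro ω _
      by_cases h : ω ∈ B
      · exact Or.inr h
      · rcases hexists ω h with ⟨j, hj⟩
        exact Or.inl (Set.mem_iUnion.2 ⟨j, hj⟩)
    calc (1 : ENNReal) = μ Set.univ := measure_univ.symm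
      _ ≤ μ ((⋃ j, A j) ∪ B) := measure_mono hsub
      _ ≤ μ (⋃ j, A j) + μ B := measure_union_le _ _
      _ = μ (⋃ j, A j) := by rw [hBnull, add_zero]
  -- sum up
  have hsum : ∑' j, μ (A j) = 1 := by
    rw [← measure_iUnion₀ hdisj fun j => (hAm j).nullMeasurableSet]
    exact hcover
  have hsum' : ((n : ENNReal) + 1) * μ (A (Fin.last n)) = 1 := by
    calc ((n : ENNReal) + 1) * μ (A (Fin.last n))
        = ∑' j : Fin (n + 1), μ (A (Fin.last n)) := by
          rw [tsum_fintype]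
          simp [Finset.sum_const, mul_comm]
      _ = ∑' j, μ (A j) := by
          congr 1
          funext j
          exact (key j).symm
      _ = 1 := hsum
  rw [hev]
  have hne : ((n : ENNReal) + 1) ≠ 0 := by simp
  have hnt : ((n : ENNReal) + 1) ≠ ⊤ := by
    simp [ENNReal.add_ne_top]
  rw [ENNReal.eq_div_iff hne hnt]
  exact hsum'
end
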